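/- arXiv:2108.02384 — 5 statements merged into one kernel-verified Lean document; each statement's English description precedes it below -/
import Mathlib

section
/- Let H be a hypergraph satisfying condition (C): for all hyperedges γ ⊊ α ⊊ β in H with dim γ = dim α − 1 and dim β = dim α + 1, there exists α̂ ∈ H with α̂ ≠ α, dim α̂ = dim α, and γ ⊊ α̂ ⊊ β. Let f be a discrete Morse function on H. Then for any n-hyperedge α ∈ H, the following cannot both hold: (A) there exists an (n+1)-hyperedge β ⊋ α in H with f(β) ≤ f(α); (B) there exists an (n−1)-hyperedge γ ⊊ α in H with f(γ) ≥ f(α). -/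
/-- Discrete Morse function on a hypergraph `H`. -/
def IsDiscreteMorse {V : Type*} [DecidableEq V] (H : Set (Finset V))
    (f : Finset V → ℝ) : Prop :=
  ∀ α ∈ H,
    {β : Finset V | β ∈ H ∧ α ⊂ β ∧ β.card = α.card + 1 ∧ f β ≤ f α}.Subsingleton ∧
    {γ : Finset V | γ ∈ H ∧ γ ⊂ α ∧ γ.card + 1 = α.card ∧ f α ≤ f γ}.Subsingleton

/-- Condition (C): for all hyperedges `γ ⊊ α ⊊ β` in `H` of consecutive dimensions,
there is `α̂ ∈ H`, `α̂ ≠ α`, of the same dimension as `α`, with `γ ⊊ α̂ ⊊ β`. -/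
def CondC {V : Type*} [DecidableEq V] (H : Set (Finset V)) : Prop :=
  ∀ γ α β : Finset V, γ ∈ H → α ∈ H → β ∈ H → γ ⊂ α → α ⊂ β →
    γ.card + 1 = α.card → β.card = α.card + 1 →
    ∃ α' ∈ H, α' ≠ α ∧ α'.card = α.card ∧ γ ⊂ α' ∧ α' ⊂ β

/-- If `H` satisfies condition (C) and `f` is a discrete Morse
function on `H`, then for any hyperedge `α ∈ H` the following cannot both hold:
(A) there is a hyperedge `β ∈ H` of one dimension higher with `α ⊊ β`, `f β ≤ f α`;
(B) there is a hyperedge `γ ∈ H` of one dimension lower with `γ ⊊ α`, `f γ ≥ f α`. -/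
theorem stmt11 {V : Type*} [DecidableEq V] (H : Set (Finset V))
    (hH : ∀ σ ∈ H, σ.Nonempty) (hC : CondC H)
    (f : Finset V → ℝ) (hf : IsDiscreteMorse H f) :
    ∀ α ∈ H,
      ¬ ((∃ β ∈ H, α ⊂ β ∧ β.card = α.card + 1 ∧ f β ≤ f α) ∧
         (∃ γ ∈ H, γ ⊂ α ∧ γ.card + 1 = α.card ∧ f α ≤ f γ)) := by
  rintro α hα ⟨⟨β, hβ, hαβ, hcβ, hfβ⟩, ⟨γ, hγ, hγα, hcγ, hfγ⟩⟩
  obtain ⟨α', hα', hne, hcα', hγα', hα'β⟩ := hC γ α β hγ hα hβ hγα hαβ hcγ hcβ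
  by_cases h : f β ≤ f α'
  · have hsub := (hf β hβ).2
    have h1 : α ∈ {δ : Finset V | δ ∈ H ∧ δ ⊂ β ∧ δ.card + 1 = β.card ∧ f β ≤ f δ} :=
      ⟨hα, hαβ, by omega, hfβ⟩
    have h2 : α' ∈ {δ : Finset V | δ ∈ H ∧ δ ⊂ β ∧ δ.card + 1 = β.card ∧ f β ≤ f δ} :=
      ⟨hα', hα'β, by omega, h⟩
    exact hne (hsub h2 h1)
  · push_neg at h
    have hsub := (hf γ hγ).1
    have h1 : α ∈ {δ : Finset V | δ ∈ H ∧ γ ⊂ δ ∧ δ.card = γ.card + 1 ∧ f δ ≤ f γ} :=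
      ⟨hα, hγα, by omega, hfγ⟩
    have h2 : α' ∈ {δ : Finset V | δ ∈ H ∧ γ ⊂ δ ∧ δ.card = γ.card + 1 ∧ f δ ≤ f γ} :=
      ⟨hα', hγα', by omega, le_of_lt (lt_of_lt_of_le h (le_trans hfβ hfγ))⟩
    exact hne (hsub h2 h1)
end

section
/- Let H be a hypergraph satisfying condition (C) and f a discrete Morse function on H. Then grad f is a proper discrete gradient vector field: each hyperedge of H appears in at most one pair of grad f. -/
/-- `{α < β}` is a pair of `grad f`. -/
def GradPair {V : Type*} [DecidableEq V] (H : Set (Finset V)) (f : Finset V → ℝ)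
    (α β : Finset V) : Prop :=
  α ∈ H ∧ β ∈ H ∧ α ⊂ β ∧ β.card = α.card + 1 ∧ f β ≤ f α

/-- No hyperedge can be both the top of one grad pair and the bottom of another. -/
lemma no_chain {V : Type*} [DecidableEq V] (H : Set (Finset V)) (hC : CondC H)
    (f : Finset V → ℝ) (hf : IsDiscreteMorse H f) (α σ β : Finset V)
    (h1 : GradPair H f α σ) (h2 : GradPair H f σ β) : False := by
  obtain ⟨hαH, hσH, hαs, hcard1, hle1⟩ := h1
  obtain ⟨-, hβH, hσβ, hcard2, hle2⟩ := h2
  obtain ⟨σ', hσ'H, hne, hcards, hαs', hs'β⟩ :=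
    hC α σ β hαH hσH hβH hαs hσβ hcard1.symm hcard2
  by_cases hle : f σ' ≤ f α
  · exact hne ((hf α hαH).1 ⟨hσ'H, hαs', by omega, hle⟩ ⟨hσH, hαs, hcard1, hle1⟩)
  · push_neg at hle
    exact hne ((hf β hβH).2 ⟨hσ'H, hs'β, by omega, le_of_lt (lt_of_le_of_lt (hle2.trans hle1) hle)⟩
      ⟨hσH, hσβ, by omega, hle2⟩)

/-- If `H` satisfies condition (C) and `f` is a discrete Morse
function on `H`, then `grad f` is proper: each hyperedge of `H` appears in at most
one pair of `grad f`. -/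
theorem stmt13 {V : Type*} [DecidableEq V] (H : Set (Finset V))
    (hH : ∀ σ ∈ H, σ.Nonempty) (hC : CondC H)
    (f : Finset V → ℝ) (hf : IsDiscreteMorse H f) :
    ∀ σ : Finset V,
      {p : Finset V × Finset V |
        GradPair H f p.1 p.2 ∧ (p.1 = σ ∨ p.2 = σ)}.Subsingleton := by
  intro σ p hp q hq
  obtain ⟨hgp, hp1 | hp2⟩ := hp <;> obtain ⟨hgq, hq1 | hq2⟩ := hq
  · have hσH : σ ∈ H := hp1 ▸ hgp.1
    have := (hf σ hσH).1 (by rw [hp1] at hgp; exact ⟨hgp.2.1, hgp.2.2.1, hgp.2.2.2.1, hgp.2.2.2.2⟩)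
      (by rw [hq1] at hgq; exact ⟨hgq.2.1, hgq.2.2.1, hgq.2.2.2.1, hgq.2.2.2.2⟩)
    exact Prod.ext (hp1.trans hq1.symm) this
  · exact absurd (no_chain H hC f hf q.1 σ p.2 (hq2 ▸ hgq) (hp1 ▸ hgp)) (by simp)
  · exact absurd (no_chain H hC f hf p.1 σ q.2 (hp2 ▸ hgp) (hq1 ▸ hgq)) (by simp)
  · have hσH : σ ∈ H := hp2 ▸ hgp.2.1
    have := (hf σ hσH).2
      (by rw [hp2] at hgp; exact ⟨hgp.1, hgp.2.2.1, hgp.2.2.2.1.symm, hgp.2.2.2.2⟩)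
      (by rw [hq2] at hgq; exact ⟨hgq.1, hgq.2.2.1, hgq.2.2.2.1.symm, hgq.2.2.2.2⟩)
    exact Prod.ext this (hp2.trans hq2.symm)
end

section
/- Let V be a discrete gradient vector field on a hypergraph H and R(V) : R(H)_* → R(H)_{*+1} the induced R-linear map sending α to −⟨∂β,α⟩β if {α < β} ∈ V and to 0 otherwise. Then V is semi-proper (there is no triple γ ⊊ α ⊊ β of consecutive-dimensional hyperedges with both {γ < α} ∈ V and {α < β} ∈ V) if and only if R(V) ∘ R(V) = 0. -/
/-- A (combinatorial) discrete gradient vector field on a hypergraph `H`: a set of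
pairs `(α, β)` of hyperedges of `H` with `α ⊊ β`, `dim β = dim α + 1`, admitting no
nontrivial closed V-path. -/
def IsDGVF {V : Type*} [DecidableEq V] (H : Set (Finset V))
    (Vf : Set (Finset V × Finset V)) : Prop :=
  (∀ p ∈ Vf, p.1 ∈ H ∧ p.2 ∈ H ∧ p.1 ⊂ p.2 ∧ p.2.card = p.1.card + 1) ∧
  ¬ ∃ (r : ℕ) (α β : ℕ → Finset V),
      (∀ i ≤ r, (α i, β i) ∈ Vf ∧ (α (i + 1), β i) ∈ Vf ∧ α i ≠ α (i + 1)) ∧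
      α (r + 1) = α 0

/-- The incidence number `⟨∂β, α⟩ = (-1)^i` of consecutive-dimensional simplices
`α ⊂ β`, where `i` is the position (in the total order of the vertices) of the
unique vertex of `β \ α` inside `β`. -/
def incidence {V : Type*} [LinearOrder V] (β α : Finset V) : ℤ :=
  (-1 : ℤ) ^ ((β \ α).sum fun v => (β.filter fun x => x < v).card)

/-- Let `Vf` be a discrete gradient vector field on a hypergraph `H`
(each hyperedge the lower element of at most one pair, so that the induced
`R`-linear map `R(V)` on the free module on hyperedges, sending `α` to
`-⟨∂β,α⟩ • β` if `(α,β) ∈ Vf` and to `0` otherwise, is well defined).  Then `Vf`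
is semi-proper (no triple `γ ⊊ α ⊊ β` with `(γ,α) ∈ Vf` and `(α,β) ∈ Vf`) if and
only if `R(V) ∘ R(V) = 0`. -/
theorem stmt14 {V : Type*} [LinearOrder V] {R : Type*} [CommRing R] [Nontrivial R]
    (H : Set (Finset V)) (hH : ∀ σ ∈ H, σ.Nonempty)
    (Vf : Set (Finset V × Finset V)) (hVf : IsDGVF H Vf)
    (hfun : ∀ α β β' : Finset V, (α, β) ∈ Vf → (α, β') ∈ Vf → β = β')
    (RV : (Finset V →₀ R) →ₗ[R] (Finset V →₀ R))
    (hRV : ∀ α β : Finset V, (α, β) ∈ Vf →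
      RV (Finsupp.single α 1) = ((-(incidence β α) : ℤ) : R) • Finsupp.single β 1)
    (hRV0 : ∀ α : Finset V, (∀ β, (α, β) ∉ Vf) → RV (Finsupp.single α 1) = 0) :
    (¬ ∃ γ α β : Finset V, (γ, α) ∈ Vf ∧ (α, β) ∈ Vf) ↔ RV ∘ₗ RV = 0 := by
  constructor
  · intro hsp
    apply Finsupp.lhom_ext
    intro a b
    have hb : (Finsupp.single a b : Finset V →₀ R) = b • Finsupp.single a 1 := by
      simp [Finsupp.smul_single]
    rw [hb, map_smul]
    suffices h : (RV ∘ₗ RV) (Finsupp.single a 1) = 0 by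
      rw [h, smul_zero]; rfl
    simp only [LinearMap.comp_apply]
    by_cases hex : ∃ β, (a, β) ∈ Vf
    · obtain ⟨β, hβ⟩ := hex
      rw [hRV a β hβ, map_smul]
      have hβ0 : ∀ β', (β, β') ∉ Vf := by
        intro β' hβ'
        exact hsp ⟨a, β, β', hβ, hβ'⟩
      rw [hRV0 β hβ0, smul_zero]
    · push_neg at hex
      rw [hRV0 a hex, map_zero]
  · intro h0
    rintro ⟨γ, α, β, hγα, hαβ⟩
    have h1 := hRV γ α hγα
    have h2 := hRV α β hαβ
    have key : (RV ∘ₗ RV) (Finsupp.single γ 1) =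
        (((-(incidence α γ) : ℤ) : R) * ((-(incidence β α) : ℤ) : R)) •
          Finsupp.single β (1 : R) := by
      simp only [LinearMap.comp_apply, h1, map_smul, h2, smul_smul]
    rw [h0] at key
    have hz : (((-(incidence α γ) : ℤ) : R) * ((-(incidence β α) : ℤ) : R)) = 0 := by
      have := congrArg (fun f : Finset V →₀ R => f β) key.symm
      simpa using this
    have hu1 : incidence α γ = 1 ∨ incidence α γ = -1 := neg_one_pow_eq_or ℤ _
    have hu2 : incidence β α = 1 ∨ incidence β α = -1 := neg_one_pow_eq_or ℤ _
    rcases hu1 with h|h <;> rcases hu2 with h'|h' <;>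
      rw [h, h'] at hz <;> simp at hz
end

section
/- Let H' ⊆ H be hypergraphs, f a discrete Morse function on H with f' = f|_{H'}, and assume each hyperedge has at most one pair in grad f and grad f'. Then R(grad f') = π ∘ R(grad f), where π : R(H)_* → R(H')_* is the canonical projection killing hyperedges not in H'. -/
/-- Let `H' ⊆ H` be hypergraphs, `f` a discrete Morse function on `H`
with `f' = f|_{H'}`, each hyperedge having at most one pair in `grad f` and in
`grad f'`.  Let `R(grad f)` and `R(grad f')` be the induced `R`-linear maps
(`α ↦ -⟨∂β,α⟩ • β` if `{α<β}` is a gradient pair, `0` otherwise), and let `π` be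
the canonical projection killing the hyperedges not in `H'`.  Then
`R(grad f') = π ∘ R(grad f)` (as maps on the free module `R(H')_*`, i.e. on the
basis elements coming from `H'`). -/
theorem stmt17 {V : Type*} [LinearOrder V] {R : Type*} [CommRing R]
    (H H' : Set (Finset V)) (hH : ∀ σ ∈ H, σ.Nonempty) (hsub : H' ⊆ H)
    (f : Finset V → ℝ) (hf : IsDiscreteMorse H f)
    (hone : ∀ α β β' : Finset V, GradPair H f α β → GradPair H f α β' → β = β')
    (hone' : ∀ α β β' : Finset V, GradPair H' f α β → GradPair H' f α β' → β = β')
    (RV RV' : (Finset V →₀ R) →ₗ[R] (Finset V →₀ R))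
    (hRV : ∀ α β : Finset V, GradPair H f α β →
      RV (Finsupp.single α 1) = ((-(incidence β α) : ℤ) : R) • Finsupp.single β 1)
    (hRV0 : ∀ α : Finset V, (∀ β, ¬ GradPair H f α β) → RV (Finsupp.single α 1) = 0)
    (hRV' : ∀ α β : Finset V, GradPair H' f α β →
      RV' (Finsupp.single α 1) = ((-(incidence β α) : ℤ) : R) • Finsupp.single β 1)
    (hRV'0 : ∀ α : Finset V, (∀ β, ¬ GradPair H' f α β) → RV' (Finsupp.single α 1) = 0)
    (π : (Finset V →₀ R) →ₗ[R] (Finset V →₀ R))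
    (hπ1 : ∀ σ ∈ H', π (Finsupp.single σ (1 : R)) = Finsupp.single σ 1)
    (hπ0 : ∀ σ ∉ H', π (Finsupp.single σ (1 : R)) = 0) :
    ∀ σ ∈ H', RV' (Finsupp.single σ (1 : R)) = π (RV (Finsupp.single σ 1)) := by
  intro σ hσ
  by_cases h : ∃ β, GradPair H' f σ β
  · obtain ⟨β, hβ⟩ := h
    have hβH : GradPair H f σ β :=
      ⟨hsub hβ.1, hsub hβ.2.1, hβ.2.2⟩
    rw [hRV' σ β hβ, hRV σ β hβH, map_smul, hπ1 β hβ.2.1]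
  · push_neg at h
    rw [hRV'0 σ h]
    by_cases h2 : ∃ β, GradPair H f σ β
    · obtain ⟨β, hβ⟩ := h2
      have hβn : β ∉ H' := fun hβ' => h β ⟨hσ, hβ', hβ.2.2⟩
      rw [hRV σ β hβ, map_smul, hπ0 β hβn, smul_zero]
    · push_neg at h2
      rw [hRV0 σ h2, map_zero]
end

section
/- Let H be a hypergraph, f̄ a discrete Morse function on ΔH with f = f̄|_H, V̄ = grad f̄ and V = grad f. Suppose R(V̄)(α) = R(V)(α) for all α ∈ H and R(V̄)(α) = 0 for all α ∈ ΔH \ H. Then M(f,H) = M(f̄,ΔH) ∩ H. -/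
/-- `α` is a critical hyperedge of `f` in `H`. -/
def IsCriticalIn {V : Type*} [DecidableEq V] (H : Set (Finset V))
    (f : Finset V → ℝ) (α : Finset V) : Prop :=
  α ∈ H ∧ (∀ β ∈ H, α ⊂ β → β.card = α.card + 1 → f α < f β) ∧
    (∀ γ ∈ H, γ ⊂ α → γ.card + 1 = α.card → f γ < f α)

/-- The associated simplicial complex `ΔH`: the smallest simplicial complex
containing `H`. -/
def assocCx {V : Type*} [DecidableEq V] (H : Set (Finset V)) : Set (Finset V) :=
  {τ : Finset V | τ.Nonempty ∧ ∃ σ ∈ H, τ ⊆ σ}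

/-- Let `H` be a hypergraph, `f̄` a discrete Morse function on `ΔH`,
`f = f̄|_H`, `V̄ = grad f̄`, `V = grad f`, with induced `R`-linear maps `R(V̄)`,
`R(V)` on the free modules on hyperedges.  If `R(V̄) α = R(V) α` for all `α ∈ H`
and `R(V̄) α = 0` for all `α ∈ ΔH \ H`, then `M(f,H) = M(f̄,ΔH) ∩ H`. -/
theorem stmt18 {V : Type*} [LinearOrder V] {R : Type*} [CommRing R] [Nontrivial R]
    (H : Set (Finset V)) (hH : ∀ σ ∈ H, σ.Nonempty)
    (fbar : Finset V → ℝ) (hfbar : IsDiscreteMorse (assocCx H) fbar)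
    (RVbar RV : (Finset V →₀ R) →ₗ[R] (Finset V →₀ R))
    (hRVbar : ∀ α β : Finset V, GradPair (assocCx H) fbar α β →
      RVbar (Finsupp.single α 1) = ((-(incidence β α) : ℤ) : R) • Finsupp.single β 1)
    (hRVbar0 : ∀ α : Finset V, (∀ β, ¬ GradPair (assocCx H) fbar α β) →
      RVbar (Finsupp.single α 1) = 0)
    (hRV : ∀ α β : Finset V, GradPair H fbar α β →
      RV (Finsupp.single α 1) = ((-(incidence β α) : ℤ) : R) • Finsupp.single β 1)
    (hRV0 : ∀ α : Finset V, (∀ β, ¬ GradPair H fbar α β) →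
      RV (Finsupp.single α 1) = 0)
    (hagree : ∀ α ∈ H, RVbar (Finsupp.single α (1 : R)) = RV (Finsupp.single α 1))
    (hzero : ∀ α ∈ assocCx H, α ∉ H → RVbar (Finsupp.single α (1 : R)) = 0) :
    {σ : Finset V | IsCriticalIn H fbar σ} =
      {σ : Finset V | IsCriticalIn (assocCx H) fbar σ} ∩ H := by
  have hsub : H ⊆ assocCx H := fun σ hσ => ⟨hH σ hσ, σ, hσ, subset_rfl⟩
  have hne : ∀ β α : Finset V, ((-(incidence β α) : ℤ) : R) • Finsupp.single β (1:R) ≠ 0 := by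
    intro β α h
    have h2 : (((-(incidence β α) : ℤ) : R) • Finsupp.single β (1:R)) β
        = ((-(incidence β α) : ℤ) : R) := by
      simp
    have hunit : IsUnit ((incidence β α : ℤ) : R) := by
      unfold incidence
      push_cast
      exact (IsUnit.neg isUnit_one).pow _
    have hne0 : ((-(incidence β α) : ℤ) : R) ≠ 0 := by
      push_cast
      simpa using (hunit.neg).ne_zero
    rw [h] at h2
    exact hne0 h2.symm
  ext σ
  simp only [Set.mem_setOf_eq, Set.mem_inter_iff]
  constructor
  · rintro ⟨hσH, hup, hdown⟩
    refine ⟨⟨hsub hσH, ?_, ?_⟩, hσH⟩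
    · intro β hβ hss hcard
      by_contra hlt
      push_neg at hlt
      have hgp : GradPair (assocCx H) fbar σ β := ⟨hsub hσH, hβ, hss, hcard, hlt⟩
      have h1 := hRVbar σ β hgp
      by_cases hex : ∃ β', GradPair H fbar σ β'
      · obtain ⟨β', hgp'⟩ := hex
        exact absurd hgp'.2.2.2.2 (not_le.mpr (hup β' hgp'.2.1 hgp'.2.2.1 hgp'.2.2.2.1))
      · push_neg at hex
        rw [hagree σ hσH, hRV0 σ hex] at h1
        exact hne β σ h1.symm
    · intro γ hγ hss hcard
      by_contra hlt
      push_neg at hlt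
      have hgp : GradPair (assocCx H) fbar γ σ := ⟨hγ, hsub hσH, hss, hcard.symm, hlt⟩
      by_cases hγH : γ ∈ H
      · exact absurd hlt (not_le.mpr (hdown γ hγH hss hcard))
      · have h1 := hRVbar γ σ hgp
        rw [hzero γ hγ hγH] at h1
        exact hne σ γ h1.symm
  · rintro ⟨⟨_, hup, hdown⟩, hσH⟩
    exact ⟨hσH, fun β hβ => hup β (hsub hβ), fun γ hγ => hdown γ (hsub hγ)⟩
end
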